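/- Let λ_n = n(n+1) for n ≥ 1, each repeated with multiplicity 2n+1, and let μ₁ ≤ μ₂ ≤ ... be the resulting nondecreasing enumeration of these eigenvalues with multiplicity. Then for every N ≥ 1, the sum μ₁ + μ₂ + ... + μ_N ≥ N²/2. -/
import Mathlib

/-- Exact value of twice the partial eigenvalue sum over a partial block. -/
lemma stokes_sum_eq : ∀ N n k : ℕ, 1 ≤ n → k ≤ 2 * n → N = n ^ 2 + k →
    2 * ∑ j ∈ Finset.Icc 1 N, (Nat.sqrt j * (Nat.sqrt j + 1)) =
      n ^ 4 + 2 * k * n ^ 2 + n ^ 2 + 2 * k * n + 2 * n := by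
  intro N
  induction N using Nat.strong_induction_on with
  | _ N ih =>
    intro n k hn hk hN
    rcases k with _ | l
    · -- k = 0, N = n^2
      rcases n with _ | _ | m
      · omega
      · -- n = 1, N = 1
        subst hN; decide
      · -- n = m + 2, previous block ends at (m+1)^2 + 2*(m+1)
        have hNe : N = (m + 1) ^ 2 + 2 * (m + 1) + 1 := by rw [hN]; ring
        have e2 : 1 ≤ (m + 1) ^ 2 := Nat.one_le_pow _ _ (by omega)
        have hprev : N - 1 = (m + 1) ^ 2 + 2 * (m + 1) := by omega
        have hsplit : Finset.Icc 1 N = Finset.Icc 1 (N - 1) ∪ {N} := by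
          ext x; simp only [Finset.mem_Icc, Finset.mem_union, Finset.mem_singleton]; omega
        have hdisj : Disjoint (Finset.Icc 1 (N - 1)) ({N} : Finset ℕ) := by
          simp only [Finset.disjoint_singleton_right, Finset.mem_Icc]; omega
        rw [hsplit, Finset.sum_union hdisj, Finset.sum_singleton]
        have hprevsum := ih (N - 1) (by omega) (m + 1) (2 * (m + 1)) (by omega)
          le_rfl hprev
        have hsq : Nat.sqrt N = m + 2 := by
          have : N = (m + 2) ^ 2 := by rw [hN]; ring
          rw [this]; exact Nat.sqrt_eq' (m + 2)
        rw [hsq]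
        nlinarith [hprevsum]
    · -- k = l + 1
      have hn2 : 1 ≤ n ^ 2 := Nat.one_le_pow _ _ (by omega)
      have hprev : N - 1 = n ^ 2 + l := by omega
      have hsplit : Finset.Icc 1 N = Finset.Icc 1 (N - 1) ∪ {N} := by
        ext x; simp only [Finset.mem_Icc, Finset.mem_union, Finset.mem_singleton]; omega
      have hdisj : Disjoint (Finset.Icc 1 (N - 1)) ({N} : Finset ℕ) := by
        simp only [Finset.disjoint_singleton_right, Finset.mem_Icc]; omega
      rw [hsplit, Finset.sum_union hdisj, Finset.sum_singleton]
      have hprevsum := ih (N - 1) (by omega) n l hn (by omega) hprev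
      have hsq : Nat.sqrt N = n := by
        rw [hN]; exact Nat.sqrt_add_eq' n (by omega)
      rw [hsq]
      nlinarith [hprevsum]

/-- Lower bound on the sum of the first `N` eigenvalues (with multiplicity)
of the Stokes operator on the unit sphere: `μ₁ + ⋯ + μ_N ≥ N²/2`, where
`μ` is the nondecreasing enumeration of the eigenvalues `n(n+1)`
(of multiplicity `2n+1`), i.e. `μ j = n(n+1)` for `n² ≤ j ≤ n² + 2n`. -/
theorem stmt_5 (μ : ℕ → ℝ)
    (hμ : ∀ j n : ℕ, 1 ≤ n → n ^ 2 ≤ j → j ≤ n ^ 2 + 2 * n →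
      μ j = n * (n + 1)) :
    ∀ N : ℕ, 1 ≤ N → (N : ℝ) ^ 2 / 2 ≤ ∑ j ∈ Finset.Icc 1 N, μ j := by
  intro N hN
  -- rewrite the sum as a cast of a natural-number sum
  have hsum : ∑ j ∈ Finset.Icc 1 N, μ j =
      ((∑ j ∈ Finset.Icc 1 N, (Nat.sqrt j * (Nat.sqrt j + 1)) : ℕ) : ℝ) := by
    push_cast
    refine Finset.sum_congr rfl fun j hj => ?_
    rw [Finset.mem_Icc] at hj
    have h1 : 1 ≤ Nat.sqrt j := Nat.sqrt_pos.2 (by omega)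
    have h2 : Nat.sqrt j ^ 2 ≤ j := Nat.sqrt_le' j
    have h3 : j < (Nat.sqrt j + 1) ^ 2 := Nat.lt_succ_sqrt' j
    have h4 : j ≤ Nat.sqrt j ^ 2 + 2 * Nat.sqrt j := by nlinarith
    rw [hμ j (Nat.sqrt j) h1 h2 h4]
  rw [hsum]
  set n := Nat.sqrt N with hn
  have h1 : 1 ≤ n := Nat.sqrt_pos.2 (by omega)
  have h2 : n ^ 2 ≤ N := Nat.sqrt_le' N
  have h3 : N < (n + 1) ^ 2 := Nat.lt_succ_sqrt' N
  have e1 : (n + 1) ^ 2 = n ^ 2 + 2 * n + 1 := by ring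
  set k := N - n ^ 2 with hk
  have hkle : k ≤ 2 * n := by omega
  have hkey := stokes_sum_eq N n k h1 hkle (by omega)
  have hineq : N ^ 2 ≤ 2 * ∑ j ∈ Finset.Icc 1 N, (Nat.sqrt j * (Nat.sqrt j + 1)) := by
    rw [hkey]
    have hNnk : N = n ^ 2 + k := by omega
    have hkk : k * k ≤ 2 * n * k := Nat.mul_le_mul_right k hkle
    rw [hNnk]
    nlinarith [hkk]
  rw [div_le_iff₀ (by norm_num : (0 : ℝ) < 2)]
  exact_mod_cast (by omega :
    N ^ 2 ≤ (∑ j ∈ Finset.Icc 1 N, (Nat.sqrt j * (Nat.sqrt j + 1))) * 2)
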